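/- Let Y be a closed subspace of a real Banach space X. Suppose Y has property-(U) in X and there is a projection P : X* → X* with range Y⊥, kernel G, and ‖P‖ = 1 = ‖I − P‖. Then Y has property-(HB): for every x* ∈ X* with decomposition x* = y# + y⊥ where y# ∈ G and 0 ≠ y⊥ ∈ Y⊥, one has ‖x*‖ > ‖y#‖ and ‖x*‖ ≥ ‖y⊥‖. -/

import Mathlib

open NormedSpace Metric Set

namespace Paper

variable {X : Type*} [NormedAddCommGroup X] [NormedSpace ℝ X]

/-- The restriction of a continuous linear functional to a subspace. -/
noncomputable def restr (Y : Submodule ℝ X) (f : StrongDual ℝ X) : StrongDual ℝ ↥Y :=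
  f.comp Y.subtypeL

/-- The annihilator `Y⊥` of a subspace `Y` in the dual. -/
def ann (Y : Submodule ℝ X) : Set (StrongDual ℝ X) := {f | ∀ y ∈ Y, f y = 0}

/-- The set of norm-preserving (Hahn–Banach) extensions of `g : Y* ` to `X`. -/
def HB (Y : Submodule ℝ X) (g : StrongDual ℝ ↥Y) : Set (StrongDual ℝ X) :=
  {f | (∀ y : Y, f (y : X) = g y) ∧ ‖f‖ = ‖g‖}

/-- Best approximations to `x` from a set `A`. -/
def bestApprox {E : Type*} [NormedAddCommGroup E] (A : Set E) (x : E) : Set E :=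
  {z ∈ A | ‖x - z‖ = infDist x A}

/-- Property-(U): every functional on `Y` has a unique norm-preserving extension to `X`. -/
def propU (Y : Submodule ℝ X) : Prop :=
  ∀ g : StrongDual ℝ ↥Y, ∃! f : StrongDual ℝ X, f ∈ HB Y g

/-- `Y# `: the set of functionals whose norm equals the norm of their restriction to `Y`. -/
def sharp (Y : Submodule ℝ X) : Set (StrongDual ℝ X) := {f | ‖f‖ = ‖restr Y f‖}

/-- Property-(HB), stated via the decomposition `X* = Y# ⊕ Y⊥`. -/
def propHB (Y : Submodule ℝ X) : Prop :=
  (∀ f ∈ sharp Y, ∀ g ∈ sharp Y, f + g ∈ sharp Y) ∧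
  (∀ (c : ℝ), ∀ f ∈ sharp Y, c • f ∈ sharp Y) ∧
  (∀ f : StrongDual ℝ X, ∃ g ∈ sharp Y, ∃ h ∈ ann Y, f = g + h) ∧
  (∀ g ∈ sharp Y, ∀ h ∈ ann Y, h ≠ 0 → ‖g‖ < ‖g + h‖ ∧ ‖h‖ ≤ ‖g + h‖)

end Paper

open Paper

/-! Since `I - P` is a contraction vanishing on `Y⊥`, every `u ∈ ker P` is the image under `I - P`
of a Hahn–Banach extension `e` of `u|_Y` (as `u - e ∈ Y⊥`), so `‖u‖ ≤ ‖e‖ = ‖u|_Y‖`, i.e. `ker P ⊆ Y#`.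
For `g ∈ Y#` and `h ∈ Y⊥` we get `‖g‖ = ‖(g + h)|_Y‖ ≤ ‖g + h‖`, and equality would make `g + h` a
second norm-preserving extension of `g|_Y`, which property-(U) forbids when `h ≠ 0`. Finally
`‖h‖ = ‖P (g + h)‖ ≤ ‖g + h‖`. -/

namespace Paper

variable {X : Type*} [NormedAddCommGroup X] [NormedSpace ℝ X] {Y : Submodule ℝ X}

@[simp]
theorem restr_apply (f : StrongDual ℝ X) (y : Y) : restr Y f y = f y := rfl

theorem norm_restr_le (f : StrongDual ℝ X) : ‖restr Y f‖ ≤ ‖f‖ :=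
  ContinuousLinearMap.opNorm_le_bound _ (norm_nonneg f) fun y => f.le_opNorm y

theorem restr_add_of_mem_ann {g h : StrongDual ℝ X} (hh : h ∈ ann Y) :
    restr Y (g + h) = restr Y g := by
  ext y
  simp [hh y y.2]

theorem sub_mem_ann_of_restr_eq {u e : StrongDual ℝ X} (hue : restr Y u = restr Y e) :
    u - e ∈ ann Y := fun y hy => by
  simpa [sub_eq_zero] using congrArg (fun φ => φ ⟨y, hy⟩) hue

theorem mem_HB_restr_of_mem_sharp {f : StrongDual ℝ X} (hf : f ∈ sharp Y) :
    f ∈ HB Y (restr Y f) :=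
  ⟨fun _ => rfl, hf⟩

theorem mem_sharp_of_contraction {Q : StrongDual ℝ X →L[ℝ] StrongDual ℝ X} (hQ : ‖Q‖ ≤ 1)
    (hker : ∀ h ∈ ann Y, Q h = 0) {u : StrongDual ℝ X} (hu : Q u = u) : u ∈ sharp Y := by
  obtain ⟨e, he, hen⟩ := exists_extension_norm_eq Y (restr Y u)
  have hue : u - e ∈ ann Y := sub_mem_ann_of_restr_eq (by ext y; simp [he])
  have hQe : Q e = u := by
    have := hker _ hue
    rw [map_sub, hu, sub_eq_zero] at this
    exact this.symm
  refine le_antisymm ?_ (norm_restr_le u)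
  calc ‖u‖ = ‖Q e‖ := by rw [hQe]
    _ ≤ ‖e‖ := by simpa using Q.le_of_opNorm_le hQ e
    _ = ‖restr Y u‖ := hen

theorem norm_lt_norm_add_of_propU (hU : propU Y) {g h : StrongDual ℝ X} (hg : g ∈ sharp Y)
    (hh : h ∈ ann Y) (h0 : h ≠ 0) : ‖g‖ < ‖g + h‖ := by
  have hrestr := restr_add_of_mem_ann (g := g) hh
  have hle : ‖g‖ ≤ ‖g + h‖ := by
    calc ‖g‖ = ‖restr Y (g + h)‖ := by rw [hrestr]; exact hg
      _ ≤ ‖g + h‖ := norm_restr_le _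
  refine hle.lt_of_ne fun heq => h0 ?_
  have hgh : g + h ∈ sharp Y := by
    change ‖g + h‖ = ‖restr Y (g + h)‖
    rw [hrestr, ← heq]
    exact hg
  have hext : g + h ∈ HB Y (restr Y g) := hrestr ▸ mem_HB_restr_of_mem_sharp hgh
  simpa using (hU (restr Y g)).unique hext (mem_HB_restr_of_mem_sharp hg)

end Paper

theorem stmt6_general {X : Type*} [NormedAddCommGroup X] [NormedSpace ℝ X]
    (Y : Submodule ℝ X) (hU : propU Y)
    (P : StrongDual ℝ X →L[ℝ] StrongDual ℝ X)
    (hfix : ∀ h ∈ ann Y, P h = h)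
    (hP1 : ‖P‖ = 1)
    (hP2 : ‖ContinuousLinearMap.id ℝ (StrongDual ℝ X) - P‖ = 1) :
    ∀ f g h : StrongDual ℝ X, P g = 0 → h ∈ ann Y → h ≠ 0 → f = g + h →
      ‖g‖ < ‖f‖ ∧ ‖h‖ ≤ ‖f‖ := by
  rintro _ g h hPg hh hh0 rfl
  have hg : g ∈ sharp Y :=
    mem_sharp_of_contraction hP2.le (fun h hh => by simp [hfix h hh]) (by simp [hPg])
  refine ⟨norm_lt_norm_add_of_propU hU hg hh hh0, ?_⟩
  calc ‖h‖ = ‖P (g + h)‖ := by rw [map_add, hPg, hfix h hh, zero_add]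
    _ ≤ ‖g + h‖ := by simpa using P.le_of_opNorm_le hP1.le (g + h)

/-- if `Y` has property-(U) in `X` and there is a bi-contractive projection
`P : X* → X*` with range `Y⊥` and kernel `G`, then `Y` has property-(HB): for any
decomposition `x* = y# + y⊥` with `y# ∈ G` and `0 ≠ y⊥ ∈ Y⊥`, one has `‖x*‖ > ‖y#‖` and
`‖x*‖ ≥ ‖y⊥‖`. -/
theorem stmt6 {X : Type*} [NormedAddCommGroup X] [NormedSpace ℝ X] [CompleteSpace X]
    (Y : Submodule ℝ X) (hYc : IsClosed (Y : Set X)) (hU : propU Y)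
    (P : StrongDual ℝ X →L[ℝ] StrongDual ℝ X)
    (hproj : ∀ f : StrongDual ℝ X, P (P f) = P f)
    (hran : ∀ f : StrongDual ℝ X, P f ∈ ann Y)
    (hfix : ∀ h ∈ ann Y, P h = h)
    (hP1 : ‖P‖ = 1)
    (hP2 : ‖ContinuousLinearMap.id ℝ (StrongDual ℝ X) - P‖ = 1) :
    ∀ f g h : StrongDual ℝ X, P g = 0 → h ∈ ann Y → h ≠ 0 → f = g + h →
      ‖g‖ < ‖f‖ ∧ ‖h‖ ≤ ‖f‖ :=
  stmt6_general Y hU P hfix hP1 hP2
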